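/- Let A be a residuated lattice in which any two distinct minimal prime filters are comaximal (A is mp). Then every minimal prime filter of A is a pure filter. -/
import Mathlib


structure ResiduatedLattice (A : Type*) [Lattice A] [BoundedOrder A] where
  mul : A → A → A
  himp : A → A → A
  mul_comm : ∀ x y : A, mul x y = mul y x
  mul_assoc : ∀ x y z : A, mul (mul x y) z = mul x (mul y z)
  mul_top : ∀ x : A, mul x ⊤ = x
  adj : ∀ x y z : A, mul x z ≤ y ↔ z ≤ himp x y

namespace ResiduatedLattice

variable {A : Type*} [Lattice A] [BoundedOrder A]

/-- ¬a := a → 0 -/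
def neg (R : ResiduatedLattice A) (a : A) : A := R.himp a ⊥

/-- A filter: nonempty, closed under ⊙, and closed under joining with arbitrary elements. -/
def IsFilter (R : ResiduatedLattice A) (F : Set A) : Prop :=
  F.Nonempty ∧ (∀ x ∈ F, ∀ y ∈ F, R.mul x y ∈ F) ∧ (∀ x ∈ F, ∀ y : A, x ⊔ y ∈ F)

/-- Join of two filters: the filter generated by their union. -/
def FJoin (R : ResiduatedLattice A) (F G : Set A) : Set A :=
  {c | ∃ f ∈ F, ∃ g ∈ G, R.mul f g ≤ c}

/-- Coannulet a⊥ = {x | x ∨ a = 1}. -/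
def perp (R : ResiduatedLattice A) (a : A) : Set A := {x | x ⊔ a = ⊤}

/-- Powers aⁿ with a⁰ = 1 = ⊤. -/
def pow (R : ResiduatedLattice A) (a : A) : ℕ → A
  | 0 => ⊤
  | n + 1 => R.mul a (pow R a n)

/-- Filter generated by a filter F together with an element x. -/
def FGen (R : ResiduatedLattice A) (F : Set A) (x : A) : Set A :=
  {a | ∃ f ∈ F, ∃ n : ℕ, R.mul f (R.pow x n) ≤ a}

/-- Principal filter generated by a. -/
def principal (R : ResiduatedLattice A) (a : A) : Set A :=
  {b | ∃ n : ℕ, R.pow a n ≤ b}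

/-- The sink σ(F) = {a | a⊥ ⋎ F = A}. -/
def sink (R : ResiduatedLattice A) (F : Set A) : Set A :=
  {a | R.FJoin (R.perp a) F = Set.univ}

/-- Purity condition: a⊥ ⋎ F = A for every a ∈ F. -/
def PureOn (R : ResiduatedLattice A) (F : Set A) : Prop :=
  ∀ a ∈ F, R.FJoin (R.perp a) F = Set.univ

/-- Prime filter. -/
def IsPrime (R : ResiduatedLattice A) (F : Set A) : Prop :=
  R.IsFilter F ∧ F ≠ Set.univ ∧ ∀ x y : A, x ⊔ y ∈ F → x ∈ F ∨ y ∈ F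

/-- Minimal prime filter. -/
def IsMinimalPrime (R : ResiduatedLattice A) (F : Set A) : Prop :=
  R.IsPrime F ∧ ∀ G : Set A, R.IsPrime G → G ⊆ F → G = F

/-- Filter generated by an arbitrary set X. -/
def gen (R : ResiduatedLattice A) (X : Set A) : Set A :=
  {a | ∃ l : List A, (∀ x ∈ l, x ∈ X) ∧ l.foldr R.mul ⊤ ≤ a}

/-- Purely-prime filter: proper pure filter p such that F₁ ∩ F₂ = p for pure filters
implies F₁ = p or F₂ = p. -/
def PurelyPrime (R : ResiduatedLattice A) (p : Set A) : Prop :=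
  R.IsFilter p ∧ R.PureOn p ∧ p ≠ Set.univ ∧
    ∀ F₁ F₂ : Set A, R.IsFilter F₁ → R.PureOn F₁ → R.IsFilter F₂ → R.PureOn F₂ →
      F₁ ∩ F₂ = p → F₁ = p ∨ F₂ = p

/-- (H : a) = {x | x ∨ a ∈ H}. -/
def res (R : ResiduatedLattice A) (H : Set A) (a : A) : Set A :=
  {x | x ⊔ a ∈ H}

end ResiduatedLattice

open ResiduatedLattice

variable {A : Type*} [Lattice A] [BoundedOrder A]


namespace ResiduatedLattice

variable {A : Type*} [Lattice A] [BoundedOrder A] (R : ResiduatedLattice A)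

lemma mul_mono_right {y z : A} (x : A) (h : y ≤ z) : R.mul x y ≤ R.mul x z := by
  rw [R.adj]
  exact le_trans h ((R.adj x (R.mul x z) z).mp le_rfl)

lemma mul_mono_left {y z : A} (x : A) (h : y ≤ z) : R.mul y x ≤ R.mul z x := by
  rw [R.mul_comm y x, R.mul_comm z x]; exact R.mul_mono_right x h

lemma top_mul (x : A) : R.mul ⊤ x = x := by rw [R.mul_comm, R.mul_top]

lemma mul_le_left (x y : A) : R.mul x y ≤ x :=
  le_trans (R.mul_mono_right x le_top) (le_of_eq (R.mul_top x))

lemma mul_le_right (x y : A) : R.mul x y ≤ y := by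
  rw [R.mul_comm]; exact R.mul_le_left y x

lemma mul_sup (x y z : A) : R.mul x (y ⊔ z) = R.mul x y ⊔ R.mul x z := by
  apply le_antisymm
  · rw [R.adj]
    apply sup_le
    · rw [← R.adj]; exact le_sup_left
    · rw [← R.adj]; exact le_sup_right
  · exact sup_le (R.mul_mono_right x le_sup_left) (R.mul_mono_right x le_sup_right)

lemma sup_mul (x y z : A) : R.mul (x ⊔ y) z = R.mul x z ⊔ R.mul y z := by
  rw [R.mul_comm, R.mul_sup, R.mul_comm z x, R.mul_comm z y]

lemma pow_add (x : A) (n m : ℕ) : R.pow x (n + m) = R.mul (R.pow x n) (R.pow x m) := by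
  induction n with
  | zero => simp [pow, R.top_mul]
  | succ k ih =>
      have : k + 1 + m = (k + m) + 1 := by omega
      rw [this]
      show R.mul x (R.pow x (k + m)) = _
      rw [ih]
      show _ = R.mul (R.mul x (R.pow x k)) (R.pow x m)
      rw [R.mul_assoc]

lemma sup_pow_le (x y : A) : ∀ k n m, n + m = k →
    R.pow (x ⊔ y) (n + m) ≤ R.pow x n ⊔ R.pow y m := by
  intro k
  induction k using Nat.strong_induction_on with
  | _ k ih =>
    intro n m hk
    match n, m with
    | 0, m =>
        have : R.pow x 0 = ⊤ := rfl
        rw [this]; exact le_trans le_top le_sup_left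
    | n + 1, 0 =>
        have : R.pow y 0 = ⊤ := rfl
        rw [this]; exact le_trans le_top le_sup_right
    | n + 1, m + 1 =>
        have hs : (n + 1) + (m + 1) = (n + (m + 1)) + 1 := by omega
        rw [hs]
        show R.mul (x ⊔ y) (R.pow (x ⊔ y) (n + (m+1))) ≤ _
        have h1 : R.pow (x ⊔ y) (n + (m+1)) ≤ R.pow x n ⊔ R.pow y (m+1) :=
          ih (n + (m+1)) (by omega) n (m+1) rfl
        have h2 : R.pow (x ⊔ y) (n + (m+1)) ≤ R.pow x (n+1) ⊔ R.pow y m := by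
          have : n + (m + 1) = (n + 1) + m := by omega
          rw [this]; exact ih ((n+1) + m) (by omega) (n+1) m rfl
        rw [R.sup_mul]
        apply sup_le
        · refine le_trans (R.mul_mono_right x h1) ?_
          rw [R.mul_sup]
          apply sup_le
          · exact le_sup_left
          · exact le_trans (R.mul_le_right x _) le_sup_right
        · refine le_trans (R.mul_mono_right y h2) ?_
          rw [R.mul_sup]
          apply sup_le
          · exact le_trans (R.mul_le_right y _) le_sup_left
          · exact le_sup_right

lemma filter_top_mem {F : Set A} (hF : R.IsFilter F) : ⊤ ∈ F := by
  obtain ⟨x, hx⟩ := hF.1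
  have := hF.2.2 x hx ⊤
  rwa [sup_top_eq] at this

lemma filter_mem_of_le {F : Set A} (hF : R.IsFilter F) {x y : A}
    (hx : x ∈ F) (h : x ≤ y) : y ∈ F := by
  have := hF.2.2 x hx y
  rwa [sup_eq_right.mpr h] at this

lemma filter_pow_mem {F : Set A} (hF : R.IsFilter F) {x : A} (hx : x ∈ F) (n : ℕ) :
    R.pow x n ∈ F := by
  induction n with
  | zero => exact R.filter_top_mem hF
  | succ k ih => exact hF.2.1 x hx (R.pow x k) ih

lemma filter_bot_notMem {F : Set A} (hF : R.IsFilter F) (hprop : F ≠ Set.univ) :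
    ⊥ ∉ F := by
  intro hb
  apply hprop
  ext c
  simp only [Set.mem_univ, iff_true]
  exact R.filter_mem_of_le hF hb bot_le

lemma perp_isFilter (a : A) : R.IsFilter (R.perp a) := by
  refine ⟨⟨⊤, by simp [perp]⟩, ?_, ?_⟩
  · intro x hx y hy
    have hx' : x ⊔ a = ⊤ := hx
    have hy' : y ⊔ a = ⊤ := hy
    have key : R.mul (x ⊔ a) (y ⊔ a) ≤ R.mul x y ⊔ a := by
      rw [R.sup_mul, R.mul_sup, R.mul_sup]
      apply sup_le
      · exact sup_le le_sup_left (le_trans (R.mul_le_right x a) le_sup_right)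
      · apply sup_le
        · exact le_trans (R.mul_le_left a y) le_sup_right
        · exact le_trans (R.mul_le_left a a) le_sup_right
    rw [hx', hy', R.mul_top] at key
    exact top_le_iff.mp key
  · intro x hx y
    have hx' : x ⊔ a = ⊤ := hx
    show (x ⊔ y) ⊔ a = ⊤
    rw [sup_right_comm, hx', top_sup_eq]

lemma FJoin_isFilter {F G : Set A} (hF : R.IsFilter F) (hG : R.IsFilter G) :
    R.IsFilter (R.FJoin F G) := by
  refine ⟨⟨⊤, ⊤, R.filter_top_mem hF, ⊤, R.filter_top_mem hG, le_top⟩, ?_, ?_⟩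
  · rintro x ⟨f₁, hf₁, g₁, hg₁, h₁⟩ y ⟨f₂, hf₂, g₂, hg₂, h₂⟩
    refine ⟨R.mul f₁ f₂, hF.2.1 f₁ hf₁ f₂ hf₂, R.mul g₁ g₂, hG.2.1 g₁ hg₁ g₂ hg₂, ?_⟩
    have : R.mul (R.mul f₁ f₂) (R.mul g₁ g₂) = R.mul (R.mul f₁ g₁) (R.mul f₂ g₂) := by
      rw [R.mul_assoc, R.mul_assoc, ← R.mul_assoc f₂, ← R.mul_assoc g₁,
        R.mul_comm f₂ g₁]
    rw [this]
    exact le_trans (R.mul_mono_left _ h₁) (R.mul_mono_right _ h₂)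
  · rintro x ⟨f, hf, g, hg, h⟩ y
    exact ⟨f, hf, g, hg, le_trans h le_sup_left⟩

lemma left_subset_FJoin {F G : Set A} (hG : R.IsFilter G) : F ⊆ R.FJoin F G := by
  intro f hf
  exact ⟨f, hf, ⊤, R.filter_top_mem hG, le_of_eq (R.mul_top f)⟩

lemma right_subset_FJoin {F G : Set A} (hF : R.IsFilter F) : G ⊆ R.FJoin F G := by
  intro g hg
  exact ⟨⊤, R.filter_top_mem hF, g, hg, le_of_eq (R.top_mul g)⟩

lemma FJoin_subset {F G H : Set A} (hH : R.IsFilter H) (h1 : F ⊆ H) (h2 : G ⊆ H) :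
    R.FJoin F G ⊆ H := by
  rintro x ⟨f, hf, g, hg, h⟩
  exact R.filter_mem_of_le hH (hH.2.1 f (h1 hf) g (h2 hg)) h

lemma FGen_isFilter {F : Set A} (hF : R.IsFilter F) (x : A) : R.IsFilter (R.FGen F x) := by
  refine ⟨⟨⊤, ⊤, R.filter_top_mem hF, 0, le_top⟩, ?_, ?_⟩
  · rintro u ⟨f₁, hf₁, n, h₁⟩ v ⟨f₂, hf₂, m, h₂⟩
    refine ⟨R.mul f₁ f₂, hF.2.1 f₁ hf₁ f₂ hf₂, n + m, ?_⟩
    rw [R.pow_add]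
    have : R.mul (R.mul f₁ f₂) (R.mul (R.pow x n) (R.pow x m)) =
        R.mul (R.mul f₁ (R.pow x n)) (R.mul f₂ (R.pow x m)) := by
      rw [R.mul_assoc, R.mul_assoc, ← R.mul_assoc f₂, ← R.mul_assoc (R.pow x n),
        R.mul_comm f₂ (R.pow x n)]
    rw [this]
    exact le_trans (R.mul_mono_left _ h₁) (R.mul_mono_right _ h₂)
  · rintro u ⟨f, hf, n, h⟩ y
    exact ⟨f, hf, n, le_trans h le_sup_left⟩

lemma subset_FGen {F : Set A} (x : A) : F ⊆ R.FGen F x := by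
  intro f hf
  exact ⟨f, hf, 0, le_of_eq (R.mul_top f)⟩

lemma mem_FGen {F : Set A} (hF : R.IsFilter F) (x : A) : x ∈ R.FGen F x := by
  refine ⟨⊤, R.filter_top_mem hF, 1, ?_⟩
  show R.mul ⊤ (R.mul x ⊤) ≤ x
  rw [R.top_mul, R.mul_top]

/-- Separation: a filter disjoint from a ∨-closed downset containing ⊥ extends to a
prime filter still disjoint from it. -/
lemma exists_prime_disjoint (S : Set A)
    (hdown : ∀ x y : A, x ≤ y → y ∈ S → x ∈ S)
    (hsup : ∀ x ∈ S, ∀ y ∈ S, x ⊔ y ∈ S)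
    (hbot : ⊥ ∈ S)
    {F : Set A} (hF : R.IsFilter F) (hdisj : F ∩ S = ∅) :
    ∃ q : Set A, R.IsPrime q ∧ F ⊆ q ∧ q ∩ S = ∅ := by
  set 𝒮 : Set (Set A) := {G | R.IsFilter G ∧ G ∩ S = ∅} with h𝒮
  have hchain : ∀ c ⊆ 𝒮, IsChain (· ⊆ ·) c → c.Nonempty → ∃ ub ∈ 𝒮, ∀ s ∈ c, s ⊆ ub := by
    intro c hc hchain ⟨G₀, hG₀⟩
    refine ⟨⋃₀ c, ⟨⟨⟨⊤, G₀, hG₀, R.filter_top_mem (hc hG₀).1⟩, ?_, ?_⟩, ?_⟩,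
      fun s hs => Set.subset_sUnion_of_mem hs⟩
    · rintro x ⟨G₁, hG₁, hx⟩ y ⟨G₂, hG₂, hy⟩
      rcases hchain.total hG₁ hG₂ with h | h
      · exact ⟨G₂, hG₂, (hc hG₂).1.2.1 x (h hx) y hy⟩
      · exact ⟨G₁, hG₁, (hc hG₁).1.2.1 x hx y (h hy)⟩
    · rintro x ⟨G₁, hG₁, hx⟩ y
      exact ⟨G₁, hG₁, (hc hG₁).1.2.2 x hx y⟩
    · ext z
      simp only [Set.mem_inter_iff, Set.mem_sUnion, Set.mem_empty_iff_false, iff_false,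
        not_and]
      rintro ⟨G₁, hG₁, hz⟩ hzS
      have := (hc hG₁).2
      have : z ∈ G₁ ∩ S := ⟨hz, hzS⟩
      rw [(hc hG₁).2] at this
      exact this
  obtain ⟨q, hFq, hq⟩ := zorn_subset_nonempty 𝒮 hchain F ⟨hF, hdisj⟩
  have hqfil : R.IsFilter q := hq.prop.1
  have hqdisj : q ∩ S = ∅ := hq.prop.2
  have hnot : ∀ z, z ∈ q → z ∉ S := by
    intro z hz hzS
    have : z ∈ q ∩ S := ⟨hz, hzS⟩
    rw [hqdisj] at this; exact this
  refine ⟨q, ⟨hqfil, ?_, ?_⟩, hFq, hqdisj⟩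
  · intro h
    exact hnot ⊥ (h ▸ Set.mem_univ ⊥) hbot
  · intro x y hxy
    by_contra hcon
    push_neg at hcon
    obtain ⟨hx, hy⟩ := hcon
    -- FGen q x and FGen q y strictly contain q, so they meet S
    have hmeet : ∀ z : A, z ∉ q → ∃ s ∈ S, s ∈ R.FGen q z := by
      intro z hz
      by_contra hcon2
      push_neg at hcon2
      have hmem : R.FGen q z ∈ 𝒮 := by
        refine ⟨R.FGen_isFilter hqfil z, ?_⟩
        ext w
        simp only [Set.mem_inter_iff, Set.mem_empty_iff_false, iff_false, not_and]
        intro hw hwS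
        exact hcon2 w hwS hw
      have := hq.eq_of_subset hmem (R.subset_FGen z)
      exact hz (this ▸ R.mem_FGen hqfil z)
    obtain ⟨s₁, hs₁S, f₁, hf₁, n, h₁⟩ := hmeet x hx
    obtain ⟨s₂, hs₂S, f₂, hf₂, m, h₂⟩ := hmeet y hy
    have hkey : R.mul (R.mul f₁ f₂) (R.pow (x ⊔ y) (n + m)) ≤ s₁ ⊔ s₂ := by
      have h1 : R.pow (x ⊔ y) (n + m) ≤ R.pow x n ⊔ R.pow y m :=
        R.sup_pow_le x y (n + m) n m rfl
      refine le_trans (R.mul_mono_right _ h1) ?_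
      rw [R.mul_sup]
      apply sup_le
      · refine le_trans ?_ (le_trans h₁ le_sup_left)
        rw [R.mul_assoc, R.mul_comm f₂ (R.pow x n), ← R.mul_assoc]
        exact R.mul_le_left _ _
      · refine le_trans ?_ (le_trans h₂ le_sup_right)
        rw [R.mul_assoc]
        exact R.mul_le_right _ _
    have hmemq : R.mul (R.mul f₁ f₂) (R.pow (x ⊔ y) (n + m)) ∈ q :=
      hqfil.2.1 _ (hqfil.2.1 f₁ hf₁ f₂ hf₂) _ (R.filter_pow_mem hqfil hxy (n + m))
    exact hnot (s₁ ⊔ s₂) (R.filter_mem_of_le hqfil hmemq hkey) (hsup s₁ hs₁S s₂ hs₂S)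

/-- Every prime filter contains a minimal prime filter. -/
lemma exists_minimalPrime_subset {q : Set A} (hq : R.IsPrime q) :
    ∃ m : Set A, R.IsMinimalPrime m ∧ m ⊆ q := by
  set 𝒮 : Set (Set A) := {G | R.IsPrime G} with h𝒮
  have hchain : ∀ c ⊆ 𝒮, IsChain (· ⊆ ·) c → c.Nonempty → ∃ lb ∈ 𝒮, ∀ s ∈ c, lb ⊆ s := by
    intro c hc hchain ⟨G₀, hG₀⟩
    refine ⟨⋂₀ c, ⟨⟨⟨⊤, fun G hG => R.filter_top_mem (hc hG).1⟩, ?_, ?_⟩, ?_, ?_⟩,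
      fun s hs => Set.sInter_subset_of_mem hs⟩
    · intro x hx y hy
      intro G hG
      exact (hc hG).1.2.1 x (hx G hG) y (hy G hG)
    · intro x hx y G hG
      exact (hc hG).1.2.2 x (hx G hG) y
    · intro h
      apply (hc hG₀).2.1
      apply Set.eq_univ_of_univ_subset
      rw [← h]
      exact Set.sInter_subset_of_mem hG₀
    · intro x y hxy
      by_contra hcon
      push_neg at hcon
      obtain ⟨hx, hy⟩ := hcon
      simp only [Set.mem_sInter, not_forall] at hx hy
      obtain ⟨G₁, hG₁, hx1⟩ := hx
      obtain ⟨G₂, hG₂, hy2⟩ := hy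
      rcases hchain.total hG₁ hG₂ with h | h
      · rcases (hc hG₁).2.2 x y (hxy G₁ hG₁) with h' | h'
        · exact hx1 h'
        · exact hy2 (h h')
      · rcases (hc hG₂).2.2 x y (hxy G₂ hG₂) with h' | h'
        · exact hx1 (h h')
        · exact hy2 h'
  obtain ⟨m, hmq, hm⟩ := zorn_superset_nonempty 𝒮 hchain q hq
  exact ⟨m, ⟨hm.prop, fun G hG hGm => hm.eq_of_subset hG hGm⟩, hmq⟩

end ResiduatedLattice

theorem stmt18 (R : ResiduatedLattice A)
    (hmp : ∀ p q : Set A, R.IsMinimalPrime p → R.IsMinimalPrime q → p ≠ q →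
      R.FJoin p q = Set.univ) :
    ∀ p : Set A, R.IsMinimalPrime p → R.PureOn p := by
  intro p hp a ha
  by_contra hne
  -- J = perp a ⋎ p is a proper filter
  have hpfil : R.IsFilter p := hp.1.1
  have hperp : R.IsFilter (R.perp a) := R.perp_isFilter a
  have hJfil : R.IsFilter (R.FJoin (R.perp a) p) := R.FJoin_isFilter hperp hpfil
  -- extend J to a prime q₀ (separate from S = {⊥})
  have hJbot : ⊥ ∉ R.FJoin (R.perp a) p := by
    intro hb
    apply hne
    apply Set.eq_univ_of_forall
    intro c
    exact R.filter_mem_of_le hJfil hb bot_le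
  obtain ⟨q₀, hq₀, hJq₀, hq₀disj⟩ := R.exists_prime_disjoint {x | x ≤ ⊥}
    (fun x y hxy hy => le_trans hxy hy) (fun x hx y hy => sup_le hx hy) le_rfl
    hJfil (by
      ext z
      simp only [Set.mem_inter_iff, Set.mem_setOf_eq, Set.mem_empty_iff_false, iff_false,
        not_and]
      intro hz hzb
      exact hJbot (le_bot_iff.mp hzb ▸ hz))
  have hq₀fil : R.IsFilter q₀ := hq₀.1
  have hbotq₀ : (⊥ : A) ∉ q₀ := R.filter_bot_notMem hq₀fil hq₀.2.1
  have hperpq₀ : R.perp a ⊆ q₀ :=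
    fun x hx => hJq₀ (R.left_subset_FJoin hpfil hx)
  have hpq₀ : p ⊆ q₀ := fun x hx => hJq₀ (R.right_subset_FJoin hperp hx)
  -- S' = {x | ∃ s ∉ q₀, x ≤ a ⊔ s}
  set S' : Set A := {x | ∃ s, s ∉ q₀ ∧ x ≤ a ⊔ s} with hS'
  have hS'down : ∀ x y : A, x ≤ y → y ∈ S' → x ∈ S' := by
    rintro x y hxy ⟨s, hs, hys⟩
    exact ⟨s, hs, le_trans hxy hys⟩
  have hS'sup : ∀ x ∈ S', ∀ y ∈ S', x ⊔ y ∈ S' := by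
    rintro x ⟨s, hs, hxs⟩ y ⟨t, ht, hyt⟩
    refine ⟨s ⊔ t, ?_, ?_⟩
    · intro hst
      rcases hq₀.2.2 s t hst with h | h
      · exact hs h
      · exact ht h
    · apply sup_le
      · exact le_trans hxs (sup_le le_sup_left (le_trans le_sup_left le_sup_right))
      · exact le_trans hyt (sup_le le_sup_left (le_trans le_sup_right le_sup_right))
  have hS'bot : ⊥ ∈ S' := ⟨⊥, hbotq₀, bot_le⟩
  have htopF : R.IsFilter {(⊤ : A)} := by
    refine ⟨⟨⊤, rfl⟩, ?_, ?_⟩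
    · rintro x rfl y rfl
      exact R.mul_top ⊤
    · rintro x rfl y
      exact top_sup_eq y
  have htopdisj : ({(⊤ : A)} : Set A) ∩ S' = ∅ := by
    ext z
    simp only [Set.mem_inter_iff, Set.mem_singleton_iff, Set.mem_empty_iff_false, iff_false,
      not_and]
    rintro rfl ⟨s, hs, hts⟩
    apply hs
    apply hperpq₀
    show s ⊔ a = ⊤
    rw [sup_comm]
    exact top_le_iff.mp hts
  obtain ⟨q₁, hq₁, _, hq₁disj⟩ := R.exists_prime_disjoint S' hS'down hS'sup hS'bot
    htopF htopdisj
  have hq₁notS : ∀ z ∈ q₁, z ∉ S' := by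
    intro z hz hzS
    have : z ∈ q₁ ∩ S' := ⟨hz, hzS⟩
    rw [hq₁disj] at this; exact this
  have hq₁q₀ : q₁ ⊆ q₀ := by
    intro x hx
    by_contra hxq₀
    exact hq₁notS x hx ⟨x, hxq₀, le_sup_right⟩
  have haq₁ : a ∉ q₁ := fun hax => hq₁notS a hax ⟨⊥, hbotq₀, le_sup_left⟩
  -- take a minimal prime q ⊆ q₁
  obtain ⟨q, hqmin, hqq₁⟩ := R.exists_minimalPrime_subset hq₁
  have haq : a ∉ q := fun h => haq₁ (hqq₁ h)
  have hpq : p ≠ q := fun h => haq (h ▸ ha)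
  have := hmp p q hp hqmin hpq
  have hsub : R.FJoin p q ⊆ q₀ :=
    R.FJoin_subset hq₀fil hpq₀ (fun x hx => hq₁q₀ (hqq₁ hx))
  apply hq₀.2.1
  apply Set.eq_univ_of_univ_subset
  rw [← this]
  exact hsub
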